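/- arXiv:1908.06209 — 2 statements merged into one kernel-verified Lean document; each statement's English description precedes it below -/
import Mathlib

section
/- Ordering of majorizers: under the assumption l(x,z) ≤ D_E(x,z) for all x,z, and with E = E₁ + E₂ and E m-strongly convex, for any x* and minimizer x̂ of E: l(x*, x̂) ≤ D_E^0(x*, x̂) ≤ W_{E₁}(-z, x*) for any z ∈ ∂E₂(x*), and W_{E₁}(-z, x*) ≤ (1/(2m))‖q‖² for q = z' + z with z' ∈ ∂E₁(x*), whenever E₁ is m-strongly convex. -/
/-!
A minimizer has subgradient `0`, so the standing assumption on `l` gives the first inequality.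
For the second, the subgradient inequality for `E₂` at `x*` and the Fenchel–Young inequality for
`E₁` at `x̂` add up to `E(x*) - E(x̂) ≤ W_{E₁}(-z, x*)`. For the third, strong convexity of `E₁`
bounds every term `⟪-z, w⟫ - E₁ w` of the supremum defining `E₁*(-z)` by a concave quadratic in
`‖w - x*‖`, whose maximum is `‖z' + z‖² / (2m)`.
-/

open RealInnerProductSpace

variable {V : Type*} [NormedAddCommGroup V] [InnerProductSpace ℝ V]

def HasSubgradientAt (f : V → ℝ) (p x : V) : Prop :=
  ∀ w, f x + ⟪p, w - x⟫ ≤ f w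

/-- The paper's `W_f(p, x)`, with `fstar` standing for the conjugate `f*`. -/
def fenchelGap (fstar f : V → ℝ) (p x : V) : ℝ :=
  fstar p + f x - ⟪p, x⟫

theorem hasSubgradientAt_zero_of_forall_le {f : V → ℝ} {x : V} (hmin : ∀ w, f x ≤ f w) :
    HasSubgradientAt f 0 x := by
  simpa [HasSubgradientAt] using hmin

theorem sub_le_fenchelGap_of_hasSubgradientAt {f g fstar : V → ℝ} {x y z : V}
    (hconj : IsLUB (Set.range fun w => ⟪-z, w⟫ - f w) (fstar (-z)))
    (hz : HasSubgradientAt g z x) :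
    (f x + g x) - (f y + g y) ≤ fenchelGap fstar f (-z) x := by
  have hg := hz y
  have hfy : ⟪-z, y⟫ - f y ≤ fstar (-z) := hconj.1 ⟨y, rfl⟩
  simp only [fenchelGap, inner_neg_left, inner_sub_right] at hg hfy ⊢
  linarith

theorem mul_sub_half_mul_sq_le {a b m : ℝ} (hm : 0 < m) :
    a * b - m / 2 * b ^ 2 ≤ 1 / (2 * m) * a ^ 2 := by
  have hsq : 1 / (2 * m) * a ^ 2 - (a * b - m / 2 * b ^ 2) = (m * b - a) ^ 2 / (2 * m) := by
    field_simp
    ring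
  have : 0 ≤ (m * b - a) ^ 2 / (2 * m) := by positivity
  linarith

theorem fenchelGap_le_of_strongConvex {f fstar : V → ℝ} {m : ℝ} (hm : 0 < m)
    (hstrong : ∀ x y p : V, HasSubgradientAt f p y → m / 2 * ‖x - y‖ ^ 2 ≤ f x - f y - ⟪p, x - y⟫)
    {x p q : V} (hconj : IsLUB (Set.range fun w => ⟪p, w⟫ - f w) (fstar p))
    (hq : HasSubgradientAt f q x) :
    fenchelGap fstar f p x ≤ 1 / (2 * m) * ‖q - p‖ ^ 2 := by
  suffices fstar p ≤ 1 / (2 * m) * ‖q - p‖ ^ 2 - f x + ⟪p, x⟫ by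
    unfold fenchelGap; linarith
  refine hconj.2 ?_
  rintro _ ⟨w, rfl⟩
  have hs := hstrong w x q hq
  have hcs : ⟪p - q, w - x⟫ ≤ ‖q - p‖ * ‖w - x‖ := by
    simpa only [norm_sub_rev p q] using real_inner_le_norm (p - q) (w - x)
  have hyoung := mul_sub_half_mul_sq_le (a := ‖q - p‖) (b := ‖w - x‖) hm
  simp only [inner_sub_left, inner_sub_right] at hs hcs ⊢
  linarith

theorem ordering_of_majorizers_general {n : ℕ}
    (l : EuclideanSpace ℝ (Fin n) → EuclideanSpace ℝ (Fin n) → ℝ)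
    (E E₁ E₂ E₁star : EuclideanSpace ℝ (Fin n) → ℝ) (m : ℝ) (hm : 0 < m)
    (hE : ∀ z, E z = E₁ z + E₂ z)
    (h₁conj : ∀ p, IsLUB (Set.range fun w => ⟪p, w⟫ - E₁ w) (E₁star p))
    -- standing assumption: `l(x,z) ≤ D_E(x,z)` for any subgradient of `E` at `z`
    (hl : ∀ x z p : EuclideanSpace ℝ (Fin n),
      (∀ w, E z + ⟪p, w - z⟫ ≤ E w) → l x z ≤ E x - E z - ⟪p, x - z⟫)
    -- `E₁` is `m`-strongly convex in the Bregman sense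
    (h₁strong : ∀ x y p : EuclideanSpace ℝ (Fin n),
      (∀ w, E₁ y + ⟪p, w - y⟫ ≤ E₁ w) →
      m / 2 * ‖x - y‖ ^ 2 ≤ E₁ x - E₁ y - ⟪p, x - y⟫)
    (xstar xhat z z' : EuclideanSpace ℝ (Fin n))
    (hmin : ∀ w, E xhat ≤ E w)
    (hz : ∀ w, E₂ xstar + ⟪z, w - xstar⟫ ≤ E₂ w)
    (hz' : ∀ w, E₁ xstar + ⟪z', w - xstar⟫ ≤ E₁ w) :
    l xstar xhat ≤ E xstar - E xhat ∧
    E xstar - E xhat ≤ E₁star (-z) + E₁ xstar - ⟪-z, xstar⟫ ∧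
    E₁star (-z) + E₁ xstar - ⟪-z, xstar⟫ ≤ 1 / (2 * m) * ‖z' + z‖ ^ 2 := by
  refine ⟨?_, ?_, ?_⟩
  · simpa using hl xstar xhat 0 (hasSubgradientAt_zero_of_forall_le hmin)
  · rw [hE, hE]
    exact sub_le_fenchelGap_of_hasSubgradientAt (h₁conj (-z)) hz
  · have hgap := fenchelGap_le_of_strongConvex hm h₁strong (h₁conj (-z)) hz'
    rwa [sub_neg_eq_add] at hgap

/-- Ordering of the parametric majorizers: loss ≤ Bregman surrogate ≤ partial
surrogate ≤ gradient penalty. -/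
theorem ordering_of_majorizers {n : ℕ}
    (l : EuclideanSpace ℝ (Fin n) → EuclideanSpace ℝ (Fin n) → ℝ)
    (E E₁ E₂ E₁star : EuclideanSpace ℝ (Fin n) → ℝ) (m : ℝ) (hm : 0 < m)
    (hE : ∀ z, E z = E₁ z + E₂ z)
    (hconv : ConvexOn ℝ Set.univ E)
    (h₁conj : ∀ p, IsLUB (Set.range fun w => ⟪p, w⟫ - E₁ w) (E₁star p))
    -- standing assumption: `l(x,z) ≤ D_E(x,z)` for any subgradient of `E` at `z`
    (hl : ∀ x z p : EuclideanSpace ℝ (Fin n),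
      (∀ w, E z + ⟪p, w - z⟫ ≤ E w) → l x z ≤ E x - E z - ⟪p, x - z⟫)
    -- `E₁` is `m`-strongly convex in the Bregman sense
    (h₁strong : ∀ x y p : EuclideanSpace ℝ (Fin n),
      (∀ w, E₁ y + ⟪p, w - y⟫ ≤ E₁ w) →
      m / 2 * ‖x - y‖ ^ 2 ≤ E₁ x - E₁ y - ⟪p, x - y⟫)
    (xstar xhat z z' : EuclideanSpace ℝ (Fin n))
    (hmin : ∀ w, E xhat ≤ E w)
    (hz : ∀ w, E₂ xstar + ⟪z, w - xstar⟫ ≤ E₂ w)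
    (hz' : ∀ w, E₁ xstar + ⟪z', w - xstar⟫ ≤ E₁ w) :
    l xstar xhat ≤ E xstar - E xhat ∧
    E xstar - E xhat ≤ E₁star (-z) + E₁ xstar - ⟪-z, xstar⟫ ∧
    E₁star (-z) + E₁ xstar - ⟪-z, xstar⟫ ≤ 1 / (2 * m) * ‖z' + z‖ ^ 2 :=
  ordering_of_majorizers_general l E E₁ E₂ E₁star m hm hE h₁conj hl h₁strong xstar xhat z z' hmin hz
    hz'
end

section
/- Descent property of iterative majorization: let θ^{k+1} minimize θ ↦ Σᵢ [l(xᵢ*, xᵢ(θᵏ)) + ⟨∇l(xᵢ*, xᵢ(θᵏ)), xᵢ(θ) - xᵢ(θᵏ)⟩ + D_{E_θ}^0(xᵢ(θᵏ), xᵢ(θ))], where xᵢ(θ) minimizes E(·, yᵢ, θ). If for all θ and all x,z, l(x, z') ≤ l(x,z) + ⟨∇l(x,z), z' - z⟩ + D_{E_θ}(z, z'), then Σᵢ l(xᵢ*, xᵢ(θ^{k+1})) ≤ Σᵢ l(xᵢ*, xᵢ(θᵏ)). -/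
open RealInnerProductSpace

/-!
Majorize–minimize: the linearized surrogate built at `θk` lies above the loss everywhere and
touches it at `θk`, so its minimizer `θk1` cannot increase the loss.
-/

section MajorizationSurrogate

variable {ι Θ F : Type*} [Fintype ι] [NormedAddCommGroup F] [InnerProductSpace ℝ F]
  (E : F → ι → Θ → ℝ) (l : F → F → ℝ) (gradl : F → F → F) (xs : ι → F) (x : Θ → ι → F)

def majorizationSurrogate (θk θ : Θ) : ℝ :=
  ∑ i, (l (xs i) (x θk i) + ⟪gradl (xs i) (x θk i), x θ i - x θk i⟫ +
    (E (x θk i) i θ - E (x θ i) i θ))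

theorem sum_loss_le_majorizationSurrogate
    (hmaj : ∀ (θ : Θ) (i : ι) (z : F),
      l (xs i) (x θ i) ≤ l (xs i) z + ⟪gradl (xs i) z, x θ i - z⟫ +
        (E z i θ - E (x θ i) i θ))
    (θk θ : Θ) :
    ∑ i, l (xs i) (x θ i) ≤ majorizationSurrogate E l gradl xs x θk θ :=
  Finset.sum_le_sum fun i _ => hmaj θ i (x θk i)

theorem majorizationSurrogate_self (θ : Θ) :
    majorizationSurrogate E l gradl xs x θ θ = ∑ i, l (xs i) (x θ i) := by
  simp [majorizationSurrogate]

end MajorizationSurrogate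

theorem iterative_majorization_descent_general {n N : ℕ} {Θ : Type*}
    (E : EuclideanSpace ℝ (Fin n) → Fin N → Θ → ℝ)
    (l : EuclideanSpace ℝ (Fin n) → EuclideanSpace ℝ (Fin n) → ℝ)
    (gradl : EuclideanSpace ℝ (Fin n) → EuclideanSpace ℝ (Fin n) →
      EuclideanSpace ℝ (Fin n))
    (xs : Fin N → EuclideanSpace ℝ (Fin n))
    (x : Θ → Fin N → EuclideanSpace ℝ (Fin n))
    -- linearized majorization inequality
    (hmaj : ∀ (θ : Θ) (i : Fin N) (z : EuclideanSpace ℝ (Fin n)),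
      l (xs i) (x θ i) ≤ l (xs i) z + ⟪gradl (xs i) z, x θ i - z⟫ +
        (E z i θ - E (x θ i) i θ))
    (θk θk1 : Θ)
    -- `θk1` minimizes the surrogate built at `θk`
    (hopt : ∀ θ : Θ,
      (∑ i, (l (xs i) (x θk i) +
        ⟪gradl (xs i) (x θk i), x θk1 i - x θk i⟫ +
        (E (x θk i) i θk1 - E (x θk1 i) i θk1))) ≤
      (∑ i, (l (xs i) (x θk i) +
        ⟪gradl (xs i) (x θk i), x θ i - x θk i⟫ +
        (E (x θk i) i θ - E (x θ i) i θ)))) :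
    (∑ i, l (xs i) (x θk1 i)) ≤ ∑ i, l (xs i) (x θk i) :=
  calc ∑ i, l (xs i) (x θk1 i)
      ≤ majorizationSurrogate E l gradl xs x θk θk1 :=
        sum_loss_le_majorizationSurrogate E l gradl xs x hmaj θk θk1
    _ ≤ majorizationSurrogate E l gradl xs x θk θk := hopt θk
    _ = ∑ i, l (xs i) (x θk i) := majorizationSurrogate_self E l gradl xs x θk

/-- Descent property of the iterative majorization scheme: if `θ^{k+1}`
minimizes the linearized surrogate built at `θᵏ`, then the bi-level loss does
not increase. -/
theorem iterative_majorization_descent {n N : ℕ} {Θ : Type*}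
    (E : EuclideanSpace ℝ (Fin n) → Fin N → Θ → ℝ)
    (l : EuclideanSpace ℝ (Fin n) → EuclideanSpace ℝ (Fin n) → ℝ)
    (gradl : EuclideanSpace ℝ (Fin n) → EuclideanSpace ℝ (Fin n) →
      EuclideanSpace ℝ (Fin n))
    (xs : Fin N → EuclideanSpace ℝ (Fin n))
    (x : Θ → Fin N → EuclideanSpace ℝ (Fin n))
    (hl0 : ∀ z, l z z = 0) (hlnonneg : ∀ z z', 0 ≤ l z z')
    -- `x θ i` minimizes `E (·) i θ`
    (hmin : ∀ θ i z, E (x θ i) i θ ≤ E z i θ)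
    -- linearized majorization inequality
    (hmaj : ∀ (θ : Θ) (i : Fin N) (z : EuclideanSpace ℝ (Fin n)),
      l (xs i) (x θ i) ≤ l (xs i) z + ⟪gradl (xs i) z, x θ i - z⟫ +
        (E z i θ - E (x θ i) i θ))
    (θk θk1 : Θ)
    -- `θk1` minimizes the surrogate built at `θk`
    (hopt : ∀ θ : Θ,
      (∑ i, (l (xs i) (x θk i) +
        ⟪gradl (xs i) (x θk i), x θk1 i - x θk i⟫ +
        (E (x θk i) i θk1 - E (x θk1 i) i θk1))) ≤
      (∑ i, (l (xs i) (x θk i) +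
        ⟪gradl (xs i) (x θk i), x θ i - x θk i⟫ +
        (E (x θk i) i θ - E (x θ i) i θ)))) :
    (∑ i, l (xs i) (x θk1 i)) ≤ ∑ i, l (xs i) (x θk i) :=
  iterative_majorization_descent_general E l gradl xs x hmaj θk θk1 hopt
end
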